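/- arXiv:2601.16764 — 2 statements merged into one kernel-verified Lean document; each statement's English description precedes it below -/
import Mathlib

section
/- Let U ⊆ ℝ^n be a C-set with inradius d(U). For ε₁, ε₂ ≥ 0 with ε₁ + ε₂ < d(U), the tightening operation is additive under composition: T(T(U, ε₁), ε₂) = T(U, ε₁ + ε₂), where T(S, ε) := {u ∈ S : u + Δ ∈ S for all ‖Δ‖ ≤ ε}. -/
open Metric

/-- The ε-tightening of a set `S`. -/
def tighten {n : ℕ} (S : Set (EuclideanSpace ℝ (Fin n))) (ε : ℝ) :
    Set (EuclideanSpace ℝ (Fin n)) :=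
  {u ∈ S | ∀ Δ : EuclideanSpace ℝ (Fin n), ‖Δ‖ ≤ ε → u + Δ ∈ S}

/-- The inradius of a set containing the origin. -/
noncomputable def inradius {n : ℕ} (U : Set (EuclideanSpace ℝ (Fin n))) : ℝ :=
  sSup {δ : ℝ | closedBall (0 : EuclideanSpace ℝ (Fin n)) δ ⊆ U}

theorem stmt1 {n : ℕ} (U : Set (EuclideanSpace ℝ (Fin n)))
    (hconv : Convex ℝ U) (hcomp : IsCompact U) (hint : (0 : EuclideanSpace ℝ (Fin n)) ∈ interior U)
    (ε₁ ε₂ : ℝ) (h1 : 0 ≤ ε₁) (h2 : 0 ≤ ε₂) (hsum : ε₁ + ε₂ < inradius U) :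
    tighten (tighten U ε₁) ε₂ = tighten U (ε₁ + ε₂) := by
  ext u
  simp only [tighten, Set.mem_setOf_eq, Set.mem_sep_iff]
  constructor
  · rintro ⟨⟨hu, -⟩, h₂⟩
    refine ⟨hu, fun Δ hΔ => ?_⟩
    by_cases hs : ε₁ + ε₂ = 0
    · have hΔ0 : Δ = 0 := norm_le_zero_iff.mp (hΔ.trans_eq hs)
      simpa [hΔ0] using hu
    · have hspos : 0 < ε₁ + ε₂ := lt_of_le_of_ne (add_nonneg h1 h2) (Ne.symm hs)
      set c : ℝ := ε₂ / (ε₁ + ε₂) with hc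
      have hc0 : 0 ≤ c := div_nonneg h2 hspos.le
      have hc1 : c ≤ 1 := by
        rw [hc, div_le_one hspos]; linarith
      have hn2 : ‖c • Δ‖ ≤ ε₂ := by
        rw [norm_smul, Real.norm_of_nonneg hc0, hc]
        calc ε₂ / (ε₁ + ε₂) * ‖Δ‖ ≤ ε₂ / (ε₁ + ε₂) * (ε₁ + ε₂) :=
              mul_le_mul_of_nonneg_left hΔ hc0
          _ = ε₂ := div_mul_cancel₀ _ hspos.ne'
      have hn1 : ‖(1 - c) • Δ‖ ≤ ε₁ := by
        rw [norm_smul, Real.norm_of_nonneg (by linarith)]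
        have h1c : 1 - c = ε₁ / (ε₁ + ε₂) := by
          rw [hc]; field_simp; ring
        rw [h1c]
        calc ε₁ / (ε₁ + ε₂) * ‖Δ‖ ≤ ε₁ / (ε₁ + ε₂) * (ε₁ + ε₂) :=
              mul_le_mul_of_nonneg_left hΔ (div_nonneg h1 hspos.le)
          _ = ε₁ := div_mul_cancel₀ _ hspos.ne'
      have := (h₂ (c • Δ) hn2).2 ((1 - c) • Δ) hn1
      have heq : u + c • Δ + (1 - c) • Δ = u + Δ := by
        rw [add_assoc, ← add_smul]; ring_nf; simp
      rwa [heq] at this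
  · rintro ⟨hu, h⟩
    refine ⟨⟨hu, fun Δ hΔ => h Δ (hΔ.trans (le_add_of_nonneg_right h2))⟩, ?_⟩
    intro Δ₂ hΔ₂
    refine ⟨h Δ₂ (hΔ₂.trans (le_add_of_nonneg_left h1)), fun Δ₁ hΔ₁ => ?_⟩
    have := h (Δ₂ + Δ₁) (by
      calc ‖Δ₂ + Δ₁‖ ≤ ‖Δ₂‖ + ‖Δ₁‖ := norm_add_le _ _
        _ ≤ ε₂ + ε₁ := add_le_add hΔ₂ hΔ₁
        _ = ε₁ + ε₂ := add_comm _ _)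
    rwa [← add_assoc] at this
end

section
/- For any vectors x₁, x₂ ∈ ℝ^n \ {0} and any ρ ≥ 0, the map x ↦ x + ρ·x/‖x‖ is expansive: ‖(x₂ + ρ x₂/‖x₂‖) − (x₁ + ρ x₁/‖x₁‖)‖ ≥ ‖x₂ − x₁‖. -/
open RealInnerProductSpace

theorem stmt11 {n : ℕ} (x₁ x₂ : EuclideanSpace ℝ (Fin n))
    (hx₁ : x₁ ≠ 0) (hx₂ : x₂ ≠ 0) (ρ : ℝ) (hρ : 0 ≤ ρ) :
    ‖x₂ - x₁‖ ≤ ‖(x₂ + (ρ / ‖x₂‖) • x₂) - (x₁ + (ρ / ‖x₁‖) • x₁)‖ := by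
  have ha : (0:ℝ) < ‖x₁‖ := norm_pos_iff.mpr hx₁
  have hb : (0:ℝ) < ‖x₂‖ := norm_pos_iff.mpr hx₂
  set u := x₂ - x₁
  set v := (ρ / ‖x₂‖) • x₂ - (ρ / ‖x₁‖) • x₁ with hv
  have hrw : (x₂ + (ρ / ‖x₂‖) • x₂) - (x₁ + (ρ / ‖x₁‖) • x₁) = u + v := by
    simp only [u, hv]; abel
  rw [hrw]
  have hcs : (inner ℝ x₁ x₂ : ℝ) ≤ ‖x₁‖ * ‖x₂‖ := real_inner_le_norm x₁ x₂
  have hinner : 0 ≤ (inner ℝ u v : ℝ) := by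
    have : (inner ℝ u v : ℝ) = (ρ / ‖x₂‖) * ‖x₂‖^2 - (ρ / ‖x₁‖) * (inner ℝ x₁ x₂ : ℝ)
        - (ρ / ‖x₂‖) * (inner ℝ x₁ x₂ : ℝ) + (ρ / ‖x₁‖) * ‖x₁‖^2 := by
      simp only [u, hv, inner_sub_left, inner_sub_right, real_inner_smul_right,
        real_inner_self_eq_norm_sq, real_inner_comm x₂ x₁]
      ring
    have key : (inner ℝ u v : ℝ) =
        ρ * (‖x₁‖ + ‖x₂‖) * (‖x₁‖ * ‖x₂‖ - (inner ℝ x₁ x₂ : ℝ)) / (‖x₁‖ * ‖x₂‖) := by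
      rw [this]; field_simp; ring
    rw [key]
    apply div_nonneg _ (by positivity)
    exact mul_nonneg (mul_nonneg hρ (by positivity)) (sub_nonneg.mpr hcs)
  have hsq := norm_add_sq_real u v
  have : ‖u‖^2 ≤ ‖u + v‖^2 := by nlinarith [sq_nonneg ‖v‖]
  exact (pow_le_pow_iff_left₀ (norm_nonneg u) (norm_nonneg _) two_ne_zero).mp this
end
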